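/- Define the backward information recursion $\widehat\Omega_t = \Omega_t + C_t^T R_t^{-1} C_t$, $M_t = F_t^T \widehat\Omega_t F_t + I$, $\Omega_{t-1}' = A_t^T (I - \widehat\Omega_t F_t M_t^{-1} F_t^T) \widehat\Omega_t A_t$, where $\Omega_t$ is symmetric positive semidefinite, $R_t$ symmetric positive definite, and $A_t, C_t, F_t$ arbitrary matrices of compatible dimensions. Then $\Omega_{t-1}'$ is symmetric positive semidefinite. In particular, initializing with $\Omega_T = 0$, every $\Omega_t$ generated by the recursion is symmetric positive semidefinite. -/

import Mathlib

/-!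
Write `Ω̂ = Ω + Cᴴ R⁻¹ C`, which is positive semidefinite, as `Ω̂ = Lᴴ L`. For `B = L F` the
push-through form of the Woodbury identity, `1 - B (Bᴴ B + 1)⁻¹ Bᴴ = (B Bᴴ + 1)⁻¹`, turns
`(1 - Ω̂ F M⁻¹ Fᴴ) Ω̂` into the congruence `Lᴴ (B Bᴴ + 1)⁻¹ L` of a positive definite matrix, so
the update `Aᴴ (1 - Ω̂ F M⁻¹ Fᴴ) Ω̂ A` is positive semidefinite. A descending induction from
`Ω_T = 0` gives the second claim.
-/

open Matrix
open scoped ComplexOrder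

namespace Matrix

variable {m n k l p : Type*} [Fintype m] [DecidableEq m] [Fintype n] [DecidableEq n]
  [Fintype k] [DecidableEq k] [Fintype l] [Fintype p] [DecidableEq p]

theorem inv_mul_add_one_eq_one_sub {α : Type*} [CommRing α] (B : Matrix m n α)
    (V : Matrix n m α) (h : IsUnit (V * B + 1)) :
    (B * V + 1)⁻¹ = 1 - B * (V * B + 1)⁻¹ * V := by
  have := add_mul_mul_inv_eq_sub (1 : Matrix m m α) B 1 V isUnit_one isUnit_one
    (by simpa [add_comm] using h)
  simpa [add_comm] using this

variable {𝕜 : Type*} [RCLike 𝕜]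

theorem PosSemidef.one_sub_mul_mul_inv_mul_conjTranspose_mul {W : Matrix n n 𝕜}
    (hW : W.PosSemidef) (F : Matrix n k 𝕜) :
    ((1 - W * F * (Fᴴ * W * F + 1)⁻¹ * Fᴴ) * W).PosSemidef := by
  open scoped MatrixOrder in
  obtain ⟨L, rfl⟩ := CStarAlgebra.nonneg_iff_eq_star_mul_self.mp hW.nonneg
  rw [star_eq_conjTranspose]
  have hM : (L * F)ᴴ * (L * F) + 1 = Fᴴ * (Lᴴ * L) * F + 1 := by
    simp only [conjTranspose_mul, Matrix.mul_assoc]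
  have hunit : IsUnit ((L * F)ᴴ * (L * F) + 1) :=
    (PosDef.posSemidef_add (posSemidef_conjTranspose_mul_self _) PosDef.one).isUnit
  have hfactor : (1 - Lᴴ * L * F * (Fᴴ * (Lᴴ * L) * F + 1)⁻¹ * Fᴴ) * (Lᴴ * L) =
      Lᴴ * (L * F * (L * F)ᴴ + 1)⁻¹ * L := by
    rw [inv_mul_add_one_eq_one_sub _ _ hunit, hM]
    simp only [conjTranspose_mul, Matrix.mul_sub, Matrix.sub_mul, Matrix.mul_one, Matrix.one_mul,
      Matrix.mul_assoc]
  rw [hfactor]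
  exact (PosSemidef.add (posSemidef_self_mul_conjTranspose _) PosSemidef.one).inv
    |>.conjTranspose_mul_mul_same L

theorem PosSemidef.conjTranspose_mul_information_update_mul {Ω : Matrix n n 𝕜}
    {R : Matrix p p 𝕜} (hΩ : Ω.PosSemidef) (hR : R.PosSemidef)
    (A : Matrix n l 𝕜) (C : Matrix p n 𝕜) (F : Matrix n k 𝕜) :
    (Aᴴ * (1 - (Ω + Cᴴ * R⁻¹ * C) * F * (Fᴴ * (Ω + Cᴴ * R⁻¹ * C) * F + 1)⁻¹ * Fᴴ) *
        (Ω + Cᴴ * R⁻¹ * C) * A).PosSemidef := by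
  have hΩ' : (Ω + Cᴴ * R⁻¹ * C).PosSemidef := hΩ.add (hR.inv.conjTranspose_mul_mul_same C)
  simpa only [Matrix.mul_assoc] using
    (hΩ'.one_sub_mul_mul_inv_mul_conjTranspose_mul F).conjTranspose_mul_mul_same A

end Matrix

open Matrix in
/-- The backward information-matrix recursion preserves positive semidefiniteness: with
`Ω̂ = Ω + Cᵀ R⁻¹ C`, `M = Fᵀ Ω̂ F + I`, the update
`Ω' = Aᵀ (I - Ω̂ F M⁻¹ Fᵀ) Ω̂ A` is symmetric positive semidefinite whenever `Ω` is
positive semidefinite and `R` positive definite.  In particular, initializing with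
`Ω_T = 0`, every `Ω_t` generated by the recursion is symmetric positive semidefinite. -/
theorem backward_information_recursion_psd (n p : ℕ) :
    (∀ (Ω A F : Matrix (Fin n) (Fin n) ℝ) (C : Matrix (Fin p) (Fin n) ℝ)
        (R : Matrix (Fin p) (Fin p) ℝ), Ω.PosSemidef → R.PosDef →
      (Aᵀ * (1 - (Ω + Cᵀ * R⁻¹ * C) * F * (Fᵀ * (Ω + Cᵀ * R⁻¹ * C) * F + 1)⁻¹ * Fᵀ) *
          (Ω + Cᵀ * R⁻¹ * C) * A).PosSemidef) ∧
    (∀ (T : ℕ) (Ω A F : ℕ → Matrix (Fin n) (Fin n) ℝ)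
        (C : ℕ → Matrix (Fin p) (Fin n) ℝ) (R : ℕ → Matrix (Fin p) (Fin p) ℝ),
      (∀ t, (R t).PosDef) → Ω T = 0 →
      (∀ t < T, Ω t =
        (A (t+1))ᵀ * (1 - (Ω (t+1) + (C (t+1))ᵀ * (R (t+1))⁻¹ * C (t+1)) * F (t+1) *
            ((F (t+1))ᵀ * (Ω (t+1) + (C (t+1))ᵀ * (R (t+1))⁻¹ * C (t+1)) * F (t+1) + 1)⁻¹ *
            (F (t+1))ᵀ) *
          (Ω (t+1) + (C (t+1))ᵀ * (R (t+1))⁻¹ * C (t+1)) * A (t+1)) →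
      ∀ t ≤ T, (Ω t).PosSemidef) := by
  refine ⟨fun Ω A F C R hΩ hR => ?_, fun T Ω A F C R hR hT hrec t ht => ?_⟩
  · simpa only [conjTranspose_eq_transpose_of_trivial] using
      hΩ.conjTranspose_mul_information_update_mul hR.posSemidef A C F
  induction ht using Nat.decreasingInduction with
  | self => exact hT ▸ .zero
  | of_succ t ht ih =>
    rw [hrec t ht]
    simpa only [conjTranspose_eq_transpose_of_trivial] using
      ih.conjTranspose_mul_information_update_mul (hR _).posSemidef _ _ _
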